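/- Let (A, m) be a noetherian local ring with infinite residue field, M a finitely generated A-module with dim M = d > 0, and I_1, ..., I_s ideals of A. If y_1, ..., y_m is a Rees superficial sequence of (I_1, ..., I_s) with respect to M and I_1···I_s ⊆ √((y_1, ..., y_m) + Ann_A M) (in particular, if y_1, ..., y_m is a system of parameters for M), then {y_1, ..., y_m} is a joint reduction of (I_1, ..., I_s) with respect to M. -/

import Mathlib

open IsLocalRing

section MixedMultDefs

variable (A : Type*) [CommRing A]

/-- The length of an `A`-module `M`, defined as the height of `⊤` in the lattice of
submodules of `M` (i.e. the supremum of lengths of chains of submodules). -/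
noncomputable def modLength (M : Type*) [AddCommGroup M] [Module A M] : ℕ∞ :=
  Order.height (⊤ : Submodule A M)

/-- The length of a module as a natural number (`0` if the length is infinite). -/
noncomputable def lenNat (M : Type*) [AddCommGroup M] [Module A M] : ℕ :=
  (modLength A M).toNat

/-- The height of an ideal: the infimum of the heights of the prime ideals containing it. -/
noncomputable def idealHeight (I : Ideal A) : ℕ∞ :=
  ⨅ (p : PrimeSpectrum A) (_ : I ≤ p.asIdeal), Order.height p

/-- The Krull dimension of a module `M`, i.e. the Krull dimension of `A / Ann_A M`. -/
noncomputable def modDim (M : Type*) [AddCommGroup M] [Module A M] : WithBot ℕ∞ :=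
  ringKrullDim (A ⧸ Module.annihilator A M)

/-- `x` is a Rees superficial element of the family of ideals `I = (I 0, …, I (t-1))` with
respect to `M`, as an element of the ideal `I i`:  `x ∈ I i` and
`xM ∩ I_1^{n_1} ⋯ I_i^{n_i + 1} ⋯ I_t^{n_t} M = x I_1^{n_1} ⋯ I_i^{n_i} ⋯ I_t^{n_t} M`
for all sufficiently large `n i` and arbitrary other exponents. -/
def IsReesSuperficial (M : Type*) [AddCommGroup M] [Module A M] {t : ℕ}
    (I : Fin t → Ideal A) (i : Fin t) (x : A) : Prop :=
  x ∈ I i ∧ ∃ N : ℕ, ∀ n : Fin t → ℕ, N ≤ n i →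
    (Ideal.span {x} • (⊤ : Submodule A M)) ⊓
        ((∏ j, I j ^ (n j + if j = i then 1 else 0)) • (⊤ : Submodule A M)) =
      Ideal.span {x} • ((∏ j, I j ^ (n j)) • (⊤ : Submodule A M))

/-- `x 0, …, x (t-1)` is a Rees superficial sequence of the family `I` with respect to `M`,
where the assignment `c` records to which ideal each element of the sequence belongs:
`x i` is a Rees superficial element of `I`, as an element of `I (c i)`, with respect to
`M / (x 0, …, x (i-1)) M`. -/
def IsReesSuperficialSeq (M : Type*) [AddCommGroup M] [Module A M] {t s : ℕ}
    (I : Fin s → Ideal A) (x : Fin t → A) (c : Fin t → Fin s) : Prop :=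
  ∀ i : Fin t,
    IsReesSuperficial A
      (M ⧸ ((Ideal.span (x '' {j | (j : ℕ) < (i : ℕ)})) • (⊤ : Submodule A M)))
      I (c i) (x i)

/-- The assignment `c` has type `(k 0, …, k (s-1))`: for each `i`, exactly `k i` members of
the sequence are assigned to the ideal indexed by `i`. -/
def OfTypeCount {t s : ℕ} (c : Fin t → Fin s) (k : Fin s → ℕ) : Prop :=
  ∀ i : Fin s, (Finset.univ.filter fun j => c j = i).card = k i

/-- The ideal generated by the members of the sequence `x` assigned (by `c`) to index `i`. -/
def jrIdeal {t s : ℕ} (x : Fin t → A) (c : Fin t → Fin s) (i : Fin s) : Ideal A :=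
  Ideal.span (x '' {j | c j = i})

/-- The defining equation of a joint reduction:  all members of the sequence lie in their
assigned ideals, and `I_1^{n_1+1} ⋯ I_s^{n_s+1} M = Σ_i (𝔍_i) I_1^{n_1+1} ⋯ I_i^{n_i} ⋯
I_s^{n_s+1} M` for all sufficiently large `n_1, …, n_s`, where `𝔍_i` consists of the
members of the sequence assigned to `I i`. -/
def IsJointReductionEq (M : Type*) [AddCommGroup M] [Module A M] {t s : ℕ}
    (I : Fin s → Ideal A) (x : Fin t → A) (c : Fin t → Fin s) : Prop :=
  (∀ j, x j ∈ I (c j)) ∧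
  ∃ N : ℕ, ∀ n : Fin s → ℕ, (∀ i, N ≤ n i) →
    ((∏ i, I i ^ (n i + 1)) • (⊤ : Submodule A M)) =
      ∑ i : Fin s, jrIdeal A x c i •
        ((∏ j, I j ^ (n j + if j = i then 0 else 1)) • (⊤ : Submodule A M))

/-- A joint reduction of the family `I` with respect to `M` of type `k`. -/
def IsJointReduction (M : Type*) [AddCommGroup M] [Module A M] {t s : ℕ}
    (I : Fin s → Ideal A) (x : Fin t → A) (c : Fin t → Fin s) (k : Fin s → ℕ) : Prop :=
  IsJointReductionEq A M I x c ∧ OfTypeCount c k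

/-- `x 1, …, x d` is a system of parameters for `M`:  `d = dim M`, the `x j` lie in the
maximal ideal, and `M / (x 1, …, x d) M` has finite length. -/
def IsSOP [IsLocalRing A] (M : Type*) [AddCommGroup M] [Module A M] {d : ℕ}
    (x : Fin d → A) : Prop :=
  modDim A M = (d : ℕ∞) ∧ (∀ j, x j ∈ maximalIdeal A) ∧
    IsFiniteLength A (M ⧸ ((Ideal.span (Set.range x)) • (⊤ : Submodule A M)))

/-- `e` is the Hilbert–Samuel multiplicity of the ideal `q` on the `d`-dimensional module
`M`: the function `n ↦ ℓ_A(M / q^n M)` is eventually given by a polynomial of degree at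
most `d` with `n^d`-coefficient `e / d!`. -/
def IsHSMult (M : Type*) [AddCommGroup M] [Module A M] (q : Ideal A) (d : ℕ) (e : ℕ) :
    Prop :=
  ∃ P : Polynomial ℚ, P.natDegree ≤ d ∧
    (∃ N : ℕ, ∀ n : ℕ, N ≤ n →
      IsFiniteLength A (M ⧸ (q ^ n • (⊤ : Submodule A M))) ∧
      (lenNat A (M ⧸ (q ^ n • (⊤ : Submodule A M))) : ℚ) = P.eval (n : ℚ)) ∧
    (e : ℚ) = P.coeff d * (Nat.factorial d : ℚ)

/-- The subquotient `J^{n_0} I_1^{n_1} ⋯ I_s^{n_s} M / J^{n_0+1} I_1^{n_1} ⋯ I_s^{n_s} M`. -/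
abbrev mixedSub (M : Type*) [AddCommGroup M] [Module A M] {s : ℕ} (J : Ideal A)
    (I : Fin s → Ideal A) (n : Fin (s + 1) → ℕ) : Submodule A M :=
  (J ^ (n 0) * ∏ i : Fin s, I i ^ (n i.succ)) • (⊤ : Submodule A M)

/-- continued -/
abbrev mixedPiece (M : Type*) [AddCommGroup M] [Module A M] {s : ℕ} (J : Ideal A)
    (I : Fin s → Ideal A) (n : Fin (s + 1) → ℕ) :=
  ↥(mixedSub A M J I n) ⧸
    (Submodule.comap (mixedSub A M J I n).subtype
      ((J ^ (n 0 + 1) * ∏ i : Fin s, I i ^ (n i.succ)) • (⊤ : Submodule A M)))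

/-- `e` is the mixed multiplicity `e_A(J^{[k_0+1]}, I_1^{[k_1]}, …, I_s^{[k_s]}; M)`:
the function `(n_0, …, n_s) ↦ ℓ_A(J^{n_0} I_1^{n_1} ⋯ I_s^{n_s} M / J^{n_0+1} I_1^{n_1}
⋯ I_s^{n_s} M)` is, for all sufficiently large `n_0, …, n_s`, given by a polynomial of
total degree at most `k_0 + k_1 + ⋯ + k_s` whose coefficient of
`n_0^{k_0} n_1^{k_1} ⋯ n_s^{k_s}` is `e / (k_0! k_1! ⋯ k_s!)`. -/
def IsMixedMult (M : Type*) [AddCommGroup M] [Module A M] {s : ℕ} (J : Ideal A)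
    (I : Fin s → Ideal A) (k0 : ℕ) (k : Fin s → ℕ) (e : ℕ) : Prop :=
  ∃ P : MvPolynomial (Fin (s + 1)) ℚ, P.totalDegree ≤ k0 + ∑ i, k i ∧
    (∃ N : ℕ, ∀ n : Fin (s + 1) → ℕ, (∀ i, N ≤ n i) →
      IsFiniteLength A (mixedPiece A M J I n) ∧
      (lenNat A (mixedPiece A M J I n) : ℚ) =
        MvPolynomial.eval (fun i => (n i : ℚ)) P) ∧
    (e : ℚ) = MvPolynomial.coeff (Finsupp.equivFunOnFinite.symm (Fin.cons k0 k)) P *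
      ((Nat.factorial k0 * ∏ i, Nat.factorial (k i) : ℕ) : ℚ)

/-- `e` is the mixed multiplicity `e_A(I_1^{[k_1]}, …, I_s^{[k_s]}; M)` of a family of
`m`-primary ideals: the function `(n_1, …, n_s) ↦ ℓ_A(M / I_1^{n_1} ⋯ I_s^{n_s} M)` is, for
all sufficiently large `n_1, …, n_s`, given by a polynomial of total degree at most
`k_1 + ⋯ + k_s` whose coefficient of `n_1^{k_1} ⋯ n_s^{k_s}` is `e / (k_1! ⋯ k_s!)`. -/
def IsMixedMultPrimary (M : Type*) [AddCommGroup M] [Module A M] {s : ℕ}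
    (I : Fin s → Ideal A) (k : Fin s → ℕ) (e : ℕ) : Prop :=
  ∃ P : MvPolynomial (Fin s) ℚ, P.totalDegree ≤ ∑ i, k i ∧
    (∃ N : ℕ, ∀ n : Fin s → ℕ, (∀ i, N ≤ n i) →
      IsFiniteLength A (M ⧸ ((∏ i, I i ^ (n i)) • (⊤ : Submodule A M))) ∧
      (lenNat A (M ⧸ ((∏ i, I i ^ (n i)) • (⊤ : Submodule A M))) : ℚ) =
        MvPolynomial.eval (fun i => (n i : ℚ)) P) ∧
    (e : ℚ) = MvPolynomial.coeff (Finsupp.equivFunOnFinite.symm k) P *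
      ((∏ i, Nat.factorial (k i) : ℕ) : ℚ)

/-- The submodule `(0_M : I^∞) = ⋃_n (0_M : I^n)` of `M`. -/
def satSub (M : Type*) [AddCommGroup M] [Module A M] (I : Ideal A) : Submodule A M :=
  ⨆ n : ℕ, Submodule.torsionBySet A M ((I ^ n : Ideal A) : Set A)

/-- A polynomial function on an `A`-module `V` with values in the residue field of `A`:
an element of the subalgebra of functions generated by the linear ones. -/
def IsPolyFun [IsLocalRing A] (V : Type*) [AddCommGroup V] [Module A V]
    (f : V → ResidueField A) : Prop :=
  f ∈ Algebra.adjoin A {g : V → ResidueField A | ∃ l : V →ₗ[A] ResidueField A, g = ⇑l}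

/-- A Zariski open subset of an `A`-module `V` (for `V` a finite-dimensional vector space
over the residue field, this is the usual Zariski topology): the complement of the common
zero locus of a set of polynomial functions. -/
def IsZariskiOpen [IsLocalRing A] (V : Type*) [AddCommGroup V] [Module A V]
    (U : Set V) : Prop :=
  ∃ S : Set (V → ResidueField A), (∀ f ∈ S, IsPolyFun A V f) ∧
    U = {v | ∃ f ∈ S, f v ≠ 0}

end MixedMultDefs

/-! Induction on the length of the sequence, passing from `M` to `M / y₀ M`. Put
`P = I_1^{n_1+1} ⋯ I_s^{n_s+1}` and let `J'` be the joint-reduction ideal of the tail. The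
equation for the tail on `M / y₀ M` lifts to `P M ⊆ J' M + y₀ M`, and since `J' M ⊆ P M` the
modular law gives `P M = J' M + (y₀ M ∩ P M)`. Rees superficiality of `y₀ ∈ I_c` identifies
`y₀ M ∩ P M` with `y₀ I_1^{n_1+1} ⋯ I_c^{n_c} ⋯ I_s^{n_s+1} M`, the missing summand. For the
empty sequence the hypothesis says that `I_1 ⋯ I_s` is nilpotent modulo `Ann M`, so both sides
vanish for large exponents. -/

theorem Finset.prod_pow_add_ite_mul {ι α : Type*} [Fintype ι] [DecidableEq ι] [CommMonoid α]
    (f : ι → α) (n : ι → ℕ) (i : ι) :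
    (∏ j, f j ^ (n j + if j = i then 0 else 1)) * f i = ∏ j, f j ^ (n j + 1) := by
  have hfi : f i = ∏ j, f j ^ (if j = i then 1 else 0) := by simp [pow_ite]
  rw [hfi, ← Finset.prod_mul_distrib]
  refine Finset.prod_congr rfl fun j _ => ?_
  rw [← pow_add]
  split_ifs <;> rfl

section

variable {A : Type*} [CommRing A] {M N : Type*} [AddCommGroup M] [Module A M]
  [AddCommGroup N] [Module A N]

namespace Submodule

theorem smul_top_le_sup_of_quotient {L : Submodule A M} {J K : Ideal A}
    (h : J • (⊤ : Submodule A (M ⧸ L)) ≤ K • ⊤) : J • (⊤ : Submodule A M) ≤ K • ⊤ ⊔ L := by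
  calc J • ⊤ ≤ comap L.mkQ (J • ⊤) := smul_top_le_comap_smul_top J L.mkQ
    _ ≤ comap L.mkQ (K • ⊤) := comap_mono h
    _ = K • ⊤ ⊔ L := by rw [comap_smul_top_of_surjective _ _ L.mkQ_surjective, ker_mkQ]

theorem sup_le_annihilator_quotient_smul_top (J : Ideal A) :
    J ⊔ Module.annihilator A M ≤ Module.annihilator A (M ⧸ J • (⊤ : Submodule A M)) := by
  rw [annihilator_quotient]
  refine sup_le (fun r hr => mem_colon.2 fun x _ => smul_mem_smul hr trivial)
    fun r hr => mem_colon.2 fun x _ => by simp [Module.mem_annihilator.1 hr x]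

noncomputable def quotSupSMulTopEquiv (J K : Ideal A) :
    (M ⧸ (J ⊔ K) • (⊤ : Submodule A M)) ≃ₗ[A]
      (M ⧸ J • (⊤ : Submodule A M)) ⧸ K • (⊤ : Submodule A (M ⧸ J • (⊤ : Submodule A M))) :=
  quotEquivOfEq _ _ (sup_smul J K ⊤) ≪≫ₗ (quotientQuotientEquivQuotientSup _ _).symm ≪≫ₗ
    quotEquivOfEq _ _ (by rw [map_smul'', map_top, range_mkQ])

end Submodule

theorem IsReesSuperficial.of_equiv {t : ℕ} {I : Fin t → Ideal A} {i : Fin t} {x : A}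
    (e : M ≃ₗ[A] N) (h : IsReesSuperficial A M I i x) : IsReesSuperficial A N I i x := by
  obtain ⟨hx, N₀, hN₀⟩ := h
  have hmap : ∀ K : Ideal A, (K • (⊤ : Submodule A M)).map (e : M →ₗ[A] N) = K • ⊤ := fun K => by
    rw [Submodule.map_smul'', Submodule.map_top, LinearMap.range_eq_top.2 e.surjective]
  refine ⟨hx, N₀, fun n hn => ?_⟩
  have := congrArg (Submodule.map (e : M →ₗ[A] N)) (hN₀ n hn)
  rwa [Submodule.map_inf _ e.injective, hmap, hmap, Submodule.map_smul'', hmap] at this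

namespace IsReesSuperficialSeq

variable {s m : ℕ} {I : Fin s → Ideal A} {y : Fin (m + 1) → A} {c : Fin (m + 1) → Fin s}

theorem head (h : IsReesSuperficialSeq A M I y c) : IsReesSuperficial A M I (c 0) (y 0) := by
  exact (h 0).of_equiv
    ((Submodule.quotEquivOfEq _ _ (by simp)).trans (Submodule.quotEquivOfEqBot _ rfl))

theorem tail (h : IsReesSuperficialSeq A M I y c) :
    IsReesSuperficialSeq A (M ⧸ Ideal.span {y 0} • (⊤ : Submodule A M)) I
      (Fin.tail y) (Fin.tail c) := by
  intro i
  have hspan : Ideal.span (y '' {j | (j : ℕ) < (i.succ : ℕ)}) =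
      Ideal.span {y 0} ⊔ Ideal.span (Fin.tail y '' {j | (j : ℕ) < (i : ℕ)}) := by
    rw [← Ideal.span_insert]
    congr 1
    ext z
    simp [Fin.exists_fin_succ, Fin.tail, eq_comm]
  exact (h i.succ).of_equiv
    ((Submodule.quotEquivOfEq _ _ (by rw [hspan])).trans (Submodule.quotSupSMulTopEquiv _ _))

end IsReesSuperficialSeq

theorem span_range_add_annihilator_le_quotient {m : ℕ} (y : Fin (m + 1) → A) :
    Ideal.span (Set.range y) + Module.annihilator A M ≤ Ideal.span (Set.range (Fin.tail y)) +
      Module.annihilator A (M ⧸ Ideal.span {y 0} • (⊤ : Submodule A M)) := by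
  rw [← Fin.cons_self_tail y, Fin.range_cons, Ideal.span_insert]
  calc _ = Ideal.span (Set.range (Fin.tail y)) ⊔ (Ideal.span {y 0} ⊔ Module.annihilator A M) := by
        rw [Submodule.add_eq_sup]; ac_rfl
    _ ≤ _ := sup_le_sup_left (Submodule.sup_le_annihilator_quotient_smul_top _) _

section JointReduction

variable {s t : ℕ} {I : Fin s → Ideal A}

theorem jrIdeal_le {x : Fin t → A} {c : Fin t → Fin s} (h : ∀ j, x j ∈ I (c j)) (i : Fin s) :
    jrIdeal A x c i ≤ I i :=
  Ideal.span_le.2 <| by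
    rintro _ ⟨j, rfl, rfl⟩
    exact h j

theorem span_singleton_le_jrIdeal (x : Fin t → A) (c : Fin t → Fin s) (j : Fin t) :
    Ideal.span {x j} ≤ jrIdeal A x c (c j) :=
  Ideal.span_mono (Set.singleton_subset_iff.2 ⟨j, rfl, rfl⟩)

theorem jrIdeal_tail_le (x : Fin (t + 1) → A) (c : Fin (t + 1) → Fin s) (i : Fin s) :
    jrIdeal A (Fin.tail x) (Fin.tail c) i ≤ jrIdeal A x c i :=
  Ideal.span_mono <| by
    rintro _ ⟨j, hj, rfl⟩
    exact ⟨j.succ, hj, rfl⟩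

theorem isJointReductionEq_of_prod_le_radical_annihilator [IsNoetherianRing A]
    (y : Fin 0 → A) (c : Fin 0 → Fin s)
    (h : ∏ i, I i ≤ (Module.annihilator A M).radical) : IsJointReductionEq A M I y c := by
  obtain ⟨N₀, hN₀⟩ := Ideal.exists_pow_le_of_le_radical_of_fg h (IsNoetherian.noetherian _)
  refine ⟨finZeroElim, N₀, fun n hn => ?_⟩
  have hann : ∏ i, I i ^ (n i + 1) ≤ Module.annihilator A M :=
    calc ∏ i, I i ^ (n i + 1) ≤ ∏ i, I i ^ N₀ :=
          Finset.prod_le_prod' fun i _ => Ideal.pow_le_pow_right (by have := hn i; omega)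
      _ = (∏ i, I i) ^ N₀ := Finset.prod_pow _ _ _
      _ ≤ _ := hN₀
  have hjr : ∀ i, jrIdeal A y c i = ⊥ := fun i => by simp [jrIdeal]
  rw [Submodule.le_annihilator_iff.1 (hann.trans Submodule.annihilator_top.ge), eq_comm]
  exact Finset.sum_eq_zero fun i _ => by rw [hjr, Submodule.bot_smul, Submodule.zero_eq_bot]

theorem IsJointReductionEq.cons_of_isReesSuperficial {y : Fin (t + 1) → A}
    {c : Fin (t + 1) → Fin s}
    (hsup : IsReesSuperficial A M I (c 0) (y 0))
    (hjr : IsJointReductionEq A (M ⧸ Ideal.span {y 0} • (⊤ : Submodule A M)) I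
      (Fin.tail y) (Fin.tail c)) :
    IsJointReductionEq A M I y c := by
  obtain ⟨hy₀, N₀, hN₀⟩ := hsup
  obtain ⟨htail_mem, N₁, hN₁⟩ := hjr
  have hmem : ∀ j, y j ∈ I (c j) := Fin.cases hy₀ htail_mem
  refine ⟨hmem, max N₀ N₁, fun n hn => ?_⟩
  have h₁ := hN₁ n fun i => le_of_max_le_right (hn i)
  simp_rw [← mul_smul] at h₁ ⊢
  rw [← Finset.sum_smul] at h₁ ⊢
  set P := ∏ j, I j ^ (n j + 1)
  set Q : Fin s → Ideal A := fun i => ∏ j, I j ^ (n j + if j = i then 0 else 1)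
  have hQ : ∀ i, Q i * I i = P := Finset.prod_pow_add_ite_mul I n
  set J := ∑ i, jrIdeal A y c i * Q i
  set J' := ∑ i, jrIdeal A (Fin.tail y) (Fin.tail c) i * Q i
  have hJ'J : J' ≤ J :=
    Finset.sum_le_sum fun i _ => Ideal.mul_mono_left (jrIdeal_tail_le y c i)
  have hJP : J ≤ P := (Ideal.sum_eq_sup _ _).trans_le <| Finset.sup_le fun i _ =>
    (mul_comm (Q i) _ ▸ hQ i).le.trans' (Ideal.mul_mono_left (jrIdeal_le hmem i))
  have hy₀J : Ideal.span {y 0} * Q (c 0) ≤ J :=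
    (Ideal.mul_mono_left (span_singleton_le_jrIdeal y c 0)).trans <|
      Finset.single_le_sum (f := fun i => jrIdeal A y c i * Q i) (fun _ _ => bot_le)
        (Finset.mem_univ (c 0))
  have hlift : P • ⊤ ≤ J' • ⊤ ⊔ Ideal.span {y 0} • (⊤ : Submodule A M) :=
    Submodule.smul_top_le_sup_of_quotient h₁.le
  have hinter : Ideal.span {y 0} • ⊤ ⊓ P • ⊤ =
      (Ideal.span {y 0} * Q (c 0)) • (⊤ : Submodule A M) := by
    have := hN₀ (fun j => n j + if j = c 0 then 0 else 1)
      (by simpa using le_of_max_le_left (hn (c 0)))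
    have hexp : ∏ j, I j ^ ((n j + if j = c 0 then 0 else 1) + if j = c 0 then 1 else 0) = P :=
      Finset.prod_congr rfl fun j _ => by split_ifs <;> rfl
    rwa [hexp, ← mul_smul] at this
  refine le_antisymm ?_ (Submodule.smul_mono_left hJP)
  calc P • ⊤ = J' • ⊤ ⊔ (Ideal.span {y 0} • ⊤ ⊓ P • ⊤) :=
        (inf_eq_right.2 hlift).symm.trans <|
          sup_inf_assoc_of_le _ (Submodule.smul_mono_left (hJ'J.trans hJP))
    _ ≤ J • ⊤ :=
        sup_le (Submodule.smul_mono_left hJ'J) (hinter.le.trans (Submodule.smul_mono_left hy₀J))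

end JointReduction

end

theorem reesSuperficialSeq_isJointReduction_general
    (A : Type*) [CommRing A] [IsNoetherianRing A]
    (M : Type*) [AddCommGroup M] [Module A M]
    {s : ℕ} (I : Fin s → Ideal A)
    {m : ℕ} (y : Fin m → A) (c : Fin m → Fin s)
    (hseq : IsReesSuperficialSeq A M I y c)
    (hrad : (∏ i, I i) ≤
      (Ideal.span (Set.range y) + Module.annihilator A M).radical) :
    IsJointReductionEq A M I y c := by
  induction m generalizing M with
  | zero =>
    refine isJointReductionEq_of_prod_le_radical_annihilator y c (hrad.trans ?_)
    simp [Set.range_eq_empty]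
  | succ m ih =>
    have hrad' := hrad.trans (Ideal.radical_mono (span_range_add_annihilator_le_quotient y))
    exact (ih _ (Fin.tail y) (Fin.tail c) hseq.tail hrad').cons_of_isReesSuperficial hseq.head

/-- Proposition 2.6(ii).  If `y 1, …, y m` is a Rees superficial sequence
of `(I 1, …, I s)` with respect to `M` and `I 1 ⋯ I s ⊆ √((y 1, …, y m) + Ann_A M)`, then
`{y 1, …, y m}` is a joint reduction of `(I 1, …, I s)` with respect to `M`. -/
theorem reesSuperficialSeq_isJointReduction
    (A : Type*) [CommRing A] [IsNoetherianRing A] [IsLocalRing A]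
    [Infinite (ResidueField A)]
    (M : Type*) [AddCommGroup M] [Module A M] [Module.Finite A M]
    {s : ℕ} (I : Fin s → Ideal A)
    (d : ℕ) (hd : 0 < d) (hdim : modDim A M = (d : WithBot ℕ∞))
    {m : ℕ} (y : Fin m → A) (c : Fin m → Fin s)
    (hseq : IsReesSuperficialSeq A M I y c)
    (hrad : (∏ i, I i) ≤
      (Ideal.span (Set.range y) + Module.annihilator A M).radical) :
    IsJointReductionEq A M I y c :=
  reesSuperficialSeq_isJointReduction_general A M I y c hseq hrad
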